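/- Let T_C be a complete binary tree with parameters l_i ∈ [0,1] at each vertex. Define m(v_i) = (m̃(parent(v_i)))^{1/2} · l_i and m̃(v_i) = (m̃(parent(v_i)))^{1/2} · (1 - l_i), with m̃(parent(root)) = 1. Then for any internal tree T of T_C with leaves L_1(T), ..., L_N(T), the probability p(T) (defined via the recursive product π as p(T) = π(root)) equals the product of m(L_n(T)) over n = 1, ..., N. -/
import Mathlib


/-- Full binary trees: every vertex has 0 or 2 children. -/
inductive FBT where
  | leaf : FBT
  | node : FBT → FBT → FBT
deriving DecidableEq

namespace FBT

/-- Depth of a full binary tree. -/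
def depth : FBT → ℕ
  | leaf => 0
  | node a b => max a.depth b.depth + 1

/-- Positions (reversed root-paths: head is the edge nearest the vertex) of the
leaves of `T`, in left-to-right order. -/
def leaves : FBT → List (List Bool)
  | leaf => [[]]
  | node a b => a.leaves.map (· ++ [false]) ++ b.leaves.map (· ++ [true])

/-- Total number of vertices. -/
def numNodes : FBT → ℕ
  | leaf => 1
  | node a b => a.numNodes + b.numNodes + 1

/-- Number of internal (non-leaf) vertices. -/
def internals : FBT → ℕ
  | leaf => 0
  | node a b => a.internals + b.internals + 1

/-- The recursive probability function π of the stick-breaking prior: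
`pi l T pos` where `pos` is the (reversed) position of the root of `T`. -/
def pi (l : List Bool → ℝ) : FBT → List Bool → ℝ
  | leaf, pos => l pos
  | node a b, pos => (1 - l pos) * pi l a (false :: pos) * pi l b (true :: pos)

/-- Probability of an internal tree: `p(T) = π(root)`. -/
def pTree (l : List Bool → ℝ) (T : FBT) : ℝ := pi l T []

/-- The memoized value m̃, with `m̃(parent(root)) = 1`. -/
noncomputable def mt (l : List Bool → ℝ) : List Bool → ℝ
  | [] => 1 - l []
  | (b :: p) => Real.sqrt (mt l p) * (1 - l (b :: p))

/-- The memoized value m at a vertex: `m(v) = m̃(parent v)^(1/2) · l v`. -/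
noncomputable def mleaf (l : List Bool → ℝ) : List Bool → ℝ
  | [] => l []
  | (b :: p) => Real.sqrt (mt l p) * l (b :: p)

/-- `m̃(parent v)`, with the convention `m̃(parent root) = 1`. -/
noncomputable def mparent (l : List Bool → ℝ) : List Bool → ℝ
  | [] => 1
  | (_ :: p) => mt l p

/-- The set of internal trees of the complete binary tree of depth `D`,
i.e. full binary trees of depth at most `D`. -/
def trees : ℕ → Finset FBT
  | 0 => {leaf}
  | (D+1) => insert leaf ((trees D ×ˢ trees D).image (fun p => node p.1 p.2))

/-- Consecutive-leaf pairs of a single tree. -/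
def transitions (T : FBT) : Finset (List Bool × List Bool) :=
  (T.leaves.zip T.leaves.tail).toFinset

/-- The set `S(T_C)` of successive leaf transitions of the complete binary
tree of depth `D`. -/
def S (D : ℕ) : Finset (List Bool × List Bool) := (trees D).biUnion transitions

/-- The left boundary of the complete binary tree of depth `D`. -/
def Bl (D : ℕ) : Finset (List Bool) :=
  (Finset.range (D+1)).image (fun k => List.replicate k false)

/-- The right boundary of the complete binary tree of depth `D`. -/
def Br (D : ℕ) : Finset (List Bool) :=
  (Finset.range (D+1)).image (fun k => List.replicate k true)

/-- The marginalisation dynamic-programming table (indexed from `n = 1`). -/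
def M (S : Finset (List Bool × List Bool)) (Bl : Finset (List Bool))
    (w : ℕ → List Bool → ℝ) (mw : List Bool → ℝ) : ℕ → List Bool → ℝ
  | 0, _ => 0
  | 1, v => if v ∈ Bl then w 1 v * mw v else 0
  | (n+2), v => w (n+2) v * mw v *
      ∑ p ∈ S.filter (fun p => p.2 = v), M S Bl w mw (n+1) p.1

/-- The Viterbi-style max-product dynamic-programming table. -/
def Mstar (S : Finset (List Bool × List Bool)) (Bl : Finset (List Bool))
    (w : ℕ → List Bool → NNReal) (mw : List Bool → NNReal) : ℕ → List Bool → NNReal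
  | 0, _ => 0
  | 1, v => if v ∈ Bl then w 1 v * mw v else 0
  | (n+2), v => w (n+2) v * mw v *
      (S.filter (fun p => p.2 = v)).sup (fun p => Mstar S Bl w mw (n+1) p.1)

/-- The complete binary tree of depth `D`, as a full binary tree. -/
def completeTree : ℕ → FBT
  | 0 => leaf
  | (D+1) => node (completeTree D) (completeTree D)

end FBT
namespace FBT

lemma mt_nonneg (l : List Bool → ℝ) (hle : ∀ v, l v ≤ 1) : ∀ p, 0 ≤ mt l p
  | [] => by simpa [mt] using hle []
  | (b :: p) => by
      have := hle (b :: p)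
      have h0 : (0:ℝ) ≤ Real.sqrt (mt l p) := Real.sqrt_nonneg _
      simp only [mt]
      exact mul_nonneg h0 (by linarith)

lemma mparent_nonneg (l : List Bool → ℝ) (hle : ∀ v, l v ≤ 1) : ∀ p, 0 ≤ mparent l p
  | [] => by norm_num [mparent]
  | (b :: p) => mt_nonneg l hle p

lemma key (l : List Bool → ℝ) (hle : ∀ v, l v ≤ 1) :
    ∀ (T : FBT) (pos : List Bool),
      ((T.leaves.map (fun q => mleaf l (q ++ pos))).prod
        = pi l T pos * Real.sqrt (mparent l pos))
  | leaf, pos => by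
      cases pos with
      | nil => simp [leaves, pi, mleaf, mparent]
      | cons b p => simp [leaves, pi, mleaf, mparent]; ring
  | node a b, pos => by
      have ha := key l hle a (false :: pos)
      have hb := key l hle b (true :: pos)
      have hmt : Real.sqrt (mt l pos) * Real.sqrt (mt l pos) = mt l pos :=
        Real.mul_self_sqrt (mt_nonneg l hle pos)
      have hfac : mt l pos = (1 - l pos) * Real.sqrt (mparent l pos) := by
        cases pos with
        | nil => simp [mt, mparent]
        | cons c p => simp [mt, mparent]; ring
      simp only [leaves, List.map_append, List.map_map, List.prod_append, pi]
      have ha' : ((a.leaves.map fun q => mleaf l ((q ++ [false]) ++ pos)).prod)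
          = pi l a (false :: pos) * Real.sqrt (mt l pos) := by
        simpa [Function.comp, List.append_assoc, mparent] using ha
      have hb' : ((b.leaves.map fun q => mleaf l ((q ++ [true]) ++ pos)).prod)
          = pi l b (true :: pos) * Real.sqrt (mt l pos) := by
        simpa [Function.comp, List.append_assoc, mparent] using hb
      calc ((a.leaves.map fun q => mleaf l ((q ++ [false]) ++ pos)).prod)
            * ((b.leaves.map fun q => mleaf l ((q ++ [true]) ++ pos)).prod)
          = pi l a (false :: pos) * pi l b (true :: pos)
              * (Real.sqrt (mt l pos) * Real.sqrt (mt l pos)) := by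
            rw [ha', hb']; ring
        _ = pi l a (false :: pos) * pi l b (true :: pos) * mt l pos := by rw [hmt]
        _ = (1 - l pos) * pi l a (false :: pos) * pi l b (true :: pos)
              * Real.sqrt (mparent l pos) := by rw [hfac]; ring

end FBT

/-- `p(T)` equals the product of the memoized values `m` at the
leaves of `T`. -/
theorem stmt2 (l : List Bool → ℝ) (hpos : ∀ v, 0 < l v) (hle : ∀ v, l v ≤ 1)
    (T : FBT) :
    FBT.pTree l T = (T.leaves.map (FBT.mleaf l)).prod := by
  have h := FBT.key l hle T []
  simp [FBT.mparent] at h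
  simpa [FBT.pTree] using h.symm
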